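/- arXiv:math/0607019 — 6 statements merged into one kernel-verified Lean document; each statement's English description precedes it below -/
import Mathlib

section
/- For all real numbers a, b ≥ 0 and every real p ≥ 1, one has max(a,b)^(1/p) - min(a,b)^(1/p) ≤ 2^(1/p) * |a - b| / (a + b)^((p-1)/p), provided a + b > 0. -/
open Real Set

private lemma key_concave (q : ℝ) (hq0 : 0 < q) (hq1 : q ≤ 1) :
    ConcaveOn ℝ (Set.Icc (0:ℝ) 1)
      (fun t : ℝ => (1-t) ^ q + 2 ^ q * t - (1+t) ^ q) := by
  apply concaveOn_of_hasDerivWithinAt2_nonpos (convex_Icc 0 1)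
    (f' := fun t : ℝ =>
      (-1) * q * (1-t) ^ (q-1) + 2 ^ q * 1 - 1 * q * (1+t) ^ (q-1))
    (f'' := fun t : ℝ =>
      ((-1) * q) * ((-1) * (q-1) * (1-t) ^ (q-1-1)) + 0
        - (1 * q) * (1 * (q-1) * (1+t) ^ (q-1-1)))
  · -- continuity
    apply Continuous.continuousOn
    have c1 : Continuous (fun t : ℝ => (1-t) ^ q) :=
      (continuous_const.sub continuous_id).rpow_const (fun x => Or.inr hq0.le)
    have c2 : Continuous (fun t : ℝ => (1+t) ^ q) :=
      (continuous_const.add continuous_id).rpow_const (fun x => Or.inr hq0.le)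
    exact (c1.add (continuous_const.mul continuous_id)).sub c2
  · intro x hx
    rw [interior_Icc] at hx
    have hx1 : (1:ℝ) - x ≠ 0 := by have := hx.2; intro h; linarith [sub_eq_zero.mp h]
    have hx2 : (1:ℝ) + x ≠ 0 := by have := hx.1; intro h; nlinarith
    have d1 : HasDerivAt (fun t : ℝ => (1-t) ^ q) ((-1) * q * (1-x) ^ (q-1)) x :=
      ((hasDerivAt_id x).const_sub 1).rpow_const (Or.inl hx1)
    have d2 : HasDerivAt (fun t : ℝ => 2 ^ q * t) (2 ^ q * 1) x :=
      (hasDerivAt_id x).const_mul (2 ^ q)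
    have d3 : HasDerivAt (fun t : ℝ => (1+t) ^ q) (1 * q * (1+x) ^ (q-1)) x :=
      ((hasDerivAt_id x).const_add 1).rpow_const (Or.inl hx2)
    exact (((d1.add d2).sub d3)).hasDerivWithinAt
  · intro x hx
    rw [interior_Icc] at hx
    have hx1 : (1:ℝ) - x ≠ 0 := by have := hx.2; intro h; linarith [sub_eq_zero.mp h]
    have hx2 : (1:ℝ) + x ≠ 0 := by have := hx.1; intro h; nlinarith
    have e1 : HasDerivAt (fun t : ℝ => (1-t) ^ (q-1)) ((-1) * (q-1) * (1-x) ^ (q-1-1)) x :=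
      ((hasDerivAt_id x).const_sub 1).rpow_const (Or.inl hx1)
    have e3 : HasDerivAt (fun t : ℝ => (1+t) ^ (q-1)) (1 * (q-1) * (1+x) ^ (q-1-1)) x :=
      ((hasDerivAt_id x).const_add 1).rpow_const (Or.inl hx2)
    have t1 := e1.const_mul ((-1) * q)
    have t2 : HasDerivAt (fun _ : ℝ => (2:ℝ) ^ q * 1) 0 x := hasDerivAt_const x _
    have t3 := e3.const_mul (1 * q)
    exact ((t1.add t2).sub t3).hasDerivWithinAt
  · intro x hx
    rw [interior_Icc] at hx
    have h1x : (0:ℝ) < 1 - x := by linarith [hx.2]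
    have hle : (1:ℝ) - x ≤ 1 + x := by linarith [hx.1]
    have hexp : q - 1 - 1 ≤ 0 := by linarith
    have hAB : (1+x) ^ (q-1-1) ≤ (1-x) ^ (q-1-1) :=
      Real.rpow_le_rpow_of_nonpos h1x hle hexp
    have hqq : q * (q-1) ≤ 0 := mul_nonpos_of_nonneg_of_nonpos hq0.le (by linarith)
    have heq : ((-1) * q) * ((-1) * (q-1) * (1-x) ^ (q-1-1)) + 0
        - (1 * q) * (1 * (q-1) * (1+x) ^ (q-1-1))
        = (q * (q-1)) * ((1-x) ^ (q-1-1) - (1+x) ^ (q-1-1)) := by ring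
    rw [heq]
    exact mul_nonpos_of_nonpos_of_nonneg hqq (by linarith)

private lemma keyA (q : ℝ) (hq0 : 0 < q) (hq1 : q ≤ 1) {t : ℝ} (ht0 : 0 ≤ t) (ht1 : t ≤ 1) :
    (1+t) ^ q - (1-t) ^ q ≤ 2 ^ q * t := by
  have hc := key_concave q hq0 hq1
  have h0 : (0:ℝ) ∈ Set.Icc (0:ℝ) 1 := by norm_num
  have h1 : (1:ℝ) ∈ Set.Icc (0:ℝ) 1 := by norm_num
  have key := hc.2 h0 h1 (by linarith : (0:ℝ) ≤ 1 - t) ht0 (by ring)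
  simp only [smul_eq_mul, mul_zero, mul_one, zero_add] at key
  norm_num [Real.zero_rpow hq0.ne', Real.one_rpow] at key
  linarith

private lemma keyB (a b p : ℝ) (hb : 0 ≤ b) (hba : b ≤ a) (hp : 1 ≤ p) (hab : 0 < a + b) :
    a ^ (1/p) - b ^ (1/p) ≤ 2 ^ (1/p) * (a - b) / (a + b) ^ ((p-1)/p) := by
  have hp0 : 0 < p := lt_of_lt_of_le one_pos hp
  set q : ℝ := 1/p with hq
  have hq0 : 0 < q := by positivity
  have hq1 : q ≤ 1 := by rw [hq, div_le_one hp0]; exact hp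
  set s : ℝ := a + b with hs
  set t : ℝ := (a - b)/s with ht
  have ht0 : 0 ≤ t := div_nonneg (by linarith) hab.le
  have ht1 : t ≤ 1 := by rw [ht, div_le_one hab]; linarith
  have hs2 : (0:ℝ) ≤ s/2 := by linarith
  have hA : a = s/2 * (1+t) := by rw [ht]; field_simp; ring
  have hB : b = s/2 * (1-t) := by rw [ht]; field_simp; ring
  have hpe : (p-1)/p = 1 - q := by rw [hq, sub_div, div_self hp0.ne']
  have main : a ^ q - b ^ q ≤ (a - b) * s ^ (q - 1) := by
    calc a ^ q - b ^ q
        = (s/2) ^ q * ((1+t) ^ q - (1-t) ^ q) := by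
          rw [hA, hB, Real.mul_rpow hs2 (by linarith), Real.mul_rpow hs2 (by linarith)]
          ring
      _ ≤ (s/2) ^ q * (2 ^ q * t) := by
          apply mul_le_mul_of_nonneg_left (keyA q hq0 hq1 ht0 ht1)
            (Real.rpow_nonneg hs2 q)
      _ = (s/2 * 2) ^ q * t := by
          rw [Real.mul_rpow hs2 (by norm_num)]; ring
      _ = s ^ q * ((a-b)/s) := by rw [ht]; norm_num
      _ = (a - b) * (s ^ q / s ^ (1:ℝ)) := by rw [Real.rpow_one]; ring
      _ = (a - b) * s ^ (q - 1) := by rw [← Real.rpow_sub hab]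
  have h2q : (1:ℝ) ≤ 2 ^ q := Real.one_le_rpow (by norm_num) hq0.le
  have hsq : 0 ≤ s ^ (q-1) := Real.rpow_nonneg hab.le _
  calc a ^ q - b ^ q ≤ (a - b) * s ^ (q - 1) := main
    _ ≤ 2 ^ q * ((a - b) * s ^ (q - 1)) := le_mul_of_one_le_left
        (mul_nonneg (by linarith) hsq) h2q
    _ = 2 ^ q * (a - b) / s ^ ((p-1)/p) := by
        rw [hpe, div_eq_mul_inv, ← Real.rpow_neg hab.le,
          show -((1:ℝ) - q) = q - 1 by ring]
        ring

theorem stmt_0 (a b p : ℝ) (ha : 0 ≤ a) (hb : 0 ≤ b) (hp : 1 ≤ p) (hab : 0 < a + b) :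
    max a b ^ (1 / p) - min a b ^ (1 / p) ≤
      2 ^ (1 / p) * |a - b| / (a + b) ^ ((p - 1) / p) := by
  rcases le_total b a with h | h
  · rw [max_eq_left h, min_eq_right h, abs_of_nonneg (by linarith)]
    exact keyB a b p hb h hp hab
  · rw [max_eq_right h, min_eq_left h, abs_of_nonpos (by linarith), neg_sub]
    have := keyB b a p ha h hp (by linarith)
    rwa [show b + a = a + b by ring] at this
end

section
/- The function x ↦ (1+x)^(1/p) - (1-x)^(1/p) is convex on [0,1] for every real p ≥ 1, and hence for all x ∈ [0,1], (1+x)^(1/p) - (1-x)^(1/p) ≤ 2^(1/p) * x. -/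
/-!
Write `c = 1/p ∈ (0, 1]` and `f x = (1 + x)^c - (1 - x)^c`. Then
`f'' x = c (c - 1) ((1 + x)^(c - 2) - (1 - x)^(c - 2))` is a product of two nonpositive factors
on `(0, 1)`, since `c - 2 < 0` and `1 - x ≤ 1 + x`; so `f` is convex on `[0, 1]`. A convex
function vanishing at `0` lies below its chord from `0` to `1`, which gives `f x ≤ f 1 * x = 2^c x`.
-/

open Set

theorem ConvexOn.map_smul_le_smul {𝕜 E β : Type*} [Field 𝕜] [LinearOrder 𝕜] [IsStrictOrderedRing 𝕜]
    [AddCommGroup E] [Module 𝕜 E] [AddCommMonoid β] [PartialOrder β] [Module 𝕜 β]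
    {s : Set E} {f : E → β} (hf : ConvexOn 𝕜 s f) (h0 : (0 : E) ∈ s) (hf0 : f 0 = 0)
    {x : E} (hx : x ∈ s) {t : 𝕜} (ht0 : 0 ≤ t) (ht1 : t ≤ 1) : f (t • x) ≤ t • f x := by
  simpa [hf0] using hf.2 h0 hx (sub_nonneg.2 ht1) ht0 (sub_add_cancel 1 t)

theorem hasDerivAt_one_add_rpow (c : ℝ) {x : ℝ} (hx : -1 < x) :
    HasDerivAt (fun y : ℝ => (1 + y) ^ c) (c * (1 + x) ^ (c - 1)) x := by
  simpa using ((hasDerivAt_id' x).const_add 1).rpow_const (p := c) (Or.inl (by linarith))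

theorem hasDerivAt_one_sub_rpow (c : ℝ) {x : ℝ} (hx : x < 1) :
    HasDerivAt (fun y : ℝ => (1 - y) ^ c) (-(c * (1 - x) ^ (c - 1))) x := by
  simpa using ((hasDerivAt_id' x).const_sub 1).rpow_const (p := c) (Or.inl (by linarith))

theorem convexOn_one_add_rpow_sub_one_sub_rpow {c : ℝ} (hc0 : 0 ≤ c) (hc1 : c ≤ 1) :
    ConvexOn ℝ (Icc 0 1) (fun x : ℝ => (1 + x) ^ c - (1 - x) ^ c) := by
  refine convexOn_of_hasDerivWithinAt2_nonneg (convex_Icc 0 1)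
    (f' := fun x => c * (1 + x) ^ (c - 1) + c * (1 - x) ^ (c - 1))
    (f'' := fun x => c * (c - 1) * ((1 + x) ^ (c - 2) - (1 - x) ^ (c - 2))) ?_ ?_ ?_ ?_
  · exact ((continuousOn_const.add continuousOn_id).rpow_const fun _ _ => Or.inr hc0).sub
      ((continuousOn_const.sub continuousOn_id).rpow_const fun _ _ => Or.inr hc0)
  all_goals rw [interior_Icc]; rintro x ⟨hx0, hx1⟩
  · exact (((hasDerivAt_one_add_rpow c (by linarith)).sub
      (hasDerivAt_one_sub_rpow c hx1)).congr_deriv (by ring)).hasDerivWithinAt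
  · exact ((((hasDerivAt_one_add_rpow (c - 1) (by linarith)).const_mul c).add
      ((hasDerivAt_one_sub_rpow (c - 1) hx1).const_mul c)).congr_deriv
        (by ring_nf)).hasDerivWithinAt
  · have hpow : (1 + x) ^ (c - 2) ≤ (1 - x) ^ (c - 2) :=
      Real.rpow_le_rpow_of_nonpos (by linarith) (by linarith) (by linarith)
    exact mul_nonneg_of_nonpos_of_nonpos
      (mul_nonpos_of_nonneg_of_nonpos hc0 (by linarith)) (sub_nonpos.2 hpow)

theorem stmt_1 (p : ℝ) (hp : 1 ≤ p) :
    ConvexOn ℝ (Set.Icc (0 : ℝ) 1) (fun x : ℝ => (1 + x) ^ (1 / p) - (1 - x) ^ (1 / p)) ∧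
      ∀ x ∈ Set.Icc (0 : ℝ) 1,
        (1 + x) ^ (1 / p) - (1 - x) ^ (1 / p) ≤ 2 ^ (1 / p) * x := by
  have hp0 : 0 < p := by linarith
  have hconv := convexOn_one_add_rpow_sub_one_sub_rpow (one_div_pos.2 hp0).le
    ((div_le_one hp0).2 hp)
  refine ⟨hconv, fun x hx => ?_⟩
  have hchord := hconv.map_smul_le_smul (by simp) (by simp) (right_mem_Icc.2 zero_le_one)
    hx.1 hx.2
  simpa [Real.zero_rpow (inv_pos.2 hp0).ne', one_add_one_eq_two, mul_comm] using hchord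
end

section
/- Let λ > 0 and let X and Y be real-valued random variables such that E[e^{λX}], E[Y e^{λY}] and E[e^{λY}] are finite. Then E[X e^{λY}] ≤ E[Y e^{λY}] + (log E[e^{λX}] / λ) * E[e^{λY}] - (log E[e^{λY}] / λ) * E[e^{λY}]. -/
/-! With `A = ∫ exp f` and `B = ∫ exp g`, put `u = g - log B` and `v = f - log A`, so that `exp u`
and `exp v` both integrate to `1`. Integrating the tangent-line bound `exp u * (v - u) ≤ exp v - exp u`
(Jensen's inequality for the tilted measure `exp u • μ`) gives `∫ exp u * (v - u) ≤ 0`. -/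

open MeasureTheory Real

lemma Real.exp_mul_sub_le_exp_sub_exp (u v : ℝ) : exp u * (v - u) ≤ exp v - exp u := by
  have h := mul_le_mul_of_nonneg_left (add_one_le_exp (v - u)) (exp_pos u).le
  rw [← exp_add, add_sub_cancel] at h
  linarith

lemma MeasureTheory.integral_mul_exp_le_log_integral_exp {Ω : Type*} [MeasurableSpace Ω]
    {μ : Measure Ω} [NeZero μ] {f g : Ω → ℝ}
    (hf : Integrable (fun ω => exp (f ω)) μ) (hg : Integrable (fun ω => exp (g ω)) μ)
    (hfg : Integrable (fun ω => f ω * exp (g ω)) μ)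
    (hgg : Integrable (fun ω => g ω * exp (g ω)) μ) :
    ∫ ω, f ω * exp (g ω) ∂μ ≤ ∫ ω, g ω * exp (g ω) ∂μ
      + (log (∫ ω, exp (f ω) ∂μ) - log (∫ ω, exp (g ω) ∂μ)) * ∫ ω, exp (g ω) ∂μ := by
  set A := ∫ ω, exp (f ω) ∂μ
  set B := ∫ ω, exp (g ω) ∂μ
  have hA : 0 < A := integral_exp_pos hf
  have hB : 0 < B := integral_exp_pos hg
  have pointwise : ∀ ω, f ω * exp (g ω) - g ω * exp (g ω) - (log A - log B) * exp (g ω)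
      ≤ B / A * exp (f ω) - exp (g ω) := by
    intro ω
    have h := mul_le_mul_of_nonneg_left
      (exp_mul_sub_le_exp_sub_exp (g ω - log B) (f ω - log A)) hB.le
    simp only [exp_sub, exp_log hA, exp_log hB] at h
    field_simp at h ⊢
    linarith
  have hdiff : Integrable (fun ω => f ω * exp (g ω) - g ω * exp (g ω)) μ := hfg.sub hgg
  have integrated : ∫ ω, (f ω * exp (g ω) - g ω * exp (g ω) - (log A - log B) * exp (g ω)) ∂μ
      ≤ ∫ ω, (B / A * exp (f ω) - exp (g ω)) ∂μ :=
    integral_mono (hdiff.sub (hg.const_mul _)) ((hf.const_mul _).sub hg) pointwise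
  rw [integral_sub hdiff (hg.const_mul _), integral_sub hfg hgg,
    integral_sub (hf.const_mul _) hg, integral_const_mul, integral_const_mul,
    div_mul_cancel₀ _ hA.ne'] at integrated
  linarith

theorem stmt_5 {Ω : Type*} [MeasurableSpace Ω] (μ : Measure Ω) [IsProbabilityMeasure μ]
    (X Y : Ω → ℝ) (l : ℝ) (hl : 0 < l)
    (hX : Integrable (fun ω => Real.exp (l * X ω)) μ)
    (hYe : Integrable (fun ω => Y ω * Real.exp (l * Y ω)) μ)
    (hY : Integrable (fun ω => Real.exp (l * Y ω)) μ)
    (hXY : Integrable (fun ω => X ω * Real.exp (l * Y ω)) μ) :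
    ∫ ω, X ω * Real.exp (l * Y ω) ∂μ ≤
      ∫ ω, Y ω * Real.exp (l * Y ω) ∂μ
        + (Real.log (∫ ω, Real.exp (l * X ω) ∂μ) / l) * ∫ ω, Real.exp (l * Y ω) ∂μ
        - (Real.log (∫ ω, Real.exp (l * Y ω) ∂μ) / l) * ∫ ω, Real.exp (l * Y ω) ∂μ := by
  have h := integral_mul_exp_le_log_integral_exp hX hY
    (by simpa only [mul_assoc] using hXY.const_mul l)
    (by simpa only [mul_assoc] using hYe.const_mul l)
  simp only [mul_assoc, integral_const_mul] at h
  rw [← mul_le_mul_iff_right₀ hl]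
  calc l * ∫ ω, X ω * exp (l * Y ω) ∂μ ≤ _ := h
    _ = _ := by field_simp; ring
end

section
/- There exist positive constants c₁, c₂, c₃ such that for every dimension d ≥ 1, every x ∈ ℝ^d and every u ∈ ℝ, the sum over k = 1,…,d of |‖x + u e_k‖₂ - ‖x‖₂|² is at most u² (c₁ + c₂ d u² / (‖x‖₂² + c₃ u²)). -/
/-!
Write `a = ‖x + y‖` and `b = ‖x‖`, so that `(a - b)² (a + b)² = (a² - b²)² = (2⟪x, y⟫ + ‖y‖²)²`.
The triangle inequality `a ≥ b - ‖y‖` and `(3b - 2‖y‖)² ≥ 0` give `(a + b)² ≥ b²/2 + ‖y‖²/3`,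
while `(2⟪x, y⟫ + ‖y‖²)² ≤ 8⟪x, y⟫² + 2‖y‖⁴`. For `y = u eₖ` we have `⟪x, y⟫ = u xₖ`, and summing
over `k` gives `(∑ₖ |‖x + u eₖ‖ - ‖x‖|²) (‖x‖²/2 + u²/3) ≤ 8u²‖x‖² + 2du⁴`;
dividing by `(‖x‖² + 2u²/3)/2` gives the claim with `c₁ = 16`, `c₂ = 4`, `c₃ = 2/3`.
-/

open RealInnerProductSpace

lemma norm_sq_div_two_add_norm_sq_div_three_le {E : Type*} [SeminormedAddCommGroup E] (x y : E) :
    ‖x‖ ^ 2 / 2 + ‖y‖ ^ 2 / 3 ≤ (‖x + y‖ + ‖x‖) ^ 2 := by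
  have h : (‖x‖ - ‖y‖) ^ 2 ≤ ‖x + y‖ ^ 2 := by
    apply sq_le_sq'
    · linarith [add_comm y x ▸ norm_le_add_norm_add y x]
    · linarith [norm_le_add_norm_add x y]
  nlinarith [mul_nonneg (norm_nonneg (x + y)) (norm_nonneg x), sq_nonneg (3 * ‖x‖ - 2 * ‖y‖)]

lemma sq_norm_add_sub_norm_mul_le {E : Type*} [SeminormedAddCommGroup E] [InnerProductSpace ℝ E]
    (x y : E) :
    (‖x + y‖ - ‖x‖) ^ 2 * (‖x‖ ^ 2 / 2 + ‖y‖ ^ 2 / 3) ≤ 8 * ⟪x, y⟫ ^ 2 + 2 * ‖y‖ ^ 4 :=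
  calc (‖x + y‖ - ‖x‖) ^ 2 * (‖x‖ ^ 2 / 2 + ‖y‖ ^ 2 / 3)
      ≤ (‖x + y‖ - ‖x‖) ^ 2 * (‖x + y‖ + ‖x‖) ^ 2 := by
        gcongr; exact norm_sq_div_two_add_norm_sq_div_three_le x y
    _ = (‖x + y‖ ^ 2 - ‖x‖ ^ 2) ^ 2 := by ring
    _ = (2 * ⟪x, y⟫ + ‖y‖ ^ 2) ^ 2 := by rw [norm_add_sq_real]; ring
    _ ≤ 8 * ⟪x, y⟫ ^ 2 + 2 * ‖y‖ ^ 4 := by nlinarith [sq_nonneg (2 * ⟪x, y⟫ - ‖y‖ ^ 2)]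

lemma EuclideanSpace.inner_smul_single_one {ι : Type*} [Fintype ι] [DecidableEq ι]
    (x : EuclideanSpace ℝ ι) (k : ι) (u : ℝ) :
    ⟪x, u • EuclideanSpace.single k (1 : ℝ)⟫ = u * x k := by
  simp [real_inner_smul_right, EuclideanSpace.inner_single_right]

lemma EuclideanSpace.norm_smul_single_one {ι : Type*} [Fintype ι] [DecidableEq ι] (k : ι) (u : ℝ) :
    ‖u • EuclideanSpace.single k (1 : ℝ)‖ = |u| := by
  simp [norm_smul]

lemma EuclideanSpace.sum_sq_norm_add_smul_single_sub_norm_mul_le {d : ℕ}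
    (x : EuclideanSpace ℝ (Fin d)) (u : ℝ) :
    (∑ k : Fin d, |‖x + u • EuclideanSpace.single k (1 : ℝ)‖ - ‖x‖| ^ 2) *
        (‖x‖ ^ 2 / 2 + u ^ 2 / 3) ≤ 8 * u ^ 2 * ‖x‖ ^ 2 + 2 * d * u ^ 4 := by
  have hterm (k : Fin d) :
      |‖x + u • EuclideanSpace.single k (1 : ℝ)‖ - ‖x‖| ^ 2 * (‖x‖ ^ 2 / 2 + u ^ 2 / 3) ≤
        8 * u ^ 2 * x k ^ 2 + 2 * u ^ 4 := by
    have h := sq_norm_add_sub_norm_mul_le x (u • EuclideanSpace.single k (1 : ℝ))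
    rw [EuclideanSpace.inner_smul_single_one, EuclideanSpace.norm_smul_single_one, sq_abs,
      Even.pow_abs ⟨2, rfl⟩] at h
    rw [sq_abs]
    linarith [show (u * x k) ^ 2 = u ^ 2 * x k ^ 2 by ring]
  calc _ ≤ ∑ k : Fin d, (8 * u ^ 2 * x k ^ 2 + 2 * u ^ 4) := by
        rw [Finset.sum_mul]; exact Finset.sum_le_sum fun k _ ↦ hterm k
    _ = 8 * u ^ 2 * ‖x‖ ^ 2 + 2 * d * u ^ 4 := by
        rw [Finset.sum_add_distrib, ← Finset.mul_sum, ← EuclideanSpace.real_norm_sq_eq]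
        simp only [Finset.sum_const, Finset.card_univ, Fintype.card_fin, nsmul_eq_mul]
        ring

theorem stmt_8 :
    ∃ c₁ c₂ c₃ : ℝ, 0 < c₁ ∧ 0 < c₂ ∧ 0 < c₃ ∧
      ∀ (d : ℕ), 1 ≤ d → ∀ (x : EuclideanSpace ℝ (Fin d)) (u : ℝ),
        ∑ k : Fin d, |‖x + u • EuclideanSpace.single k (1 : ℝ)‖ - ‖x‖| ^ 2 ≤
          u ^ 2 * (c₁ + c₂ * d * u ^ 2 / (‖x‖ ^ 2 + c₃ * u ^ 2)) := by
  refine ⟨16, 4, 2 / 3, by norm_num, by norm_num, by norm_num, fun d _ x u ↦ ?_⟩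
  rcases eq_or_ne u 0 with rfl | hu
  · simp
  have h := EuclideanSpace.sum_sq_norm_add_smul_single_sub_norm_mul_le x u
  set T := ∑ k : Fin d, |‖x + u • EuclideanSpace.single k (1 : ℝ)‖ - ‖x‖| ^ 2
  have hS : 0 < ‖x‖ ^ 2 + 2 / 3 * u ^ 2 := by positivity
  calc T ≤ (16 * u ^ 2 * ‖x‖ ^ 2 + 4 * d * u ^ 4) / (‖x‖ ^ 2 + 2 / 3 * u ^ 2) := by
        rw [le_div_iff₀ hS]; linarith
    _ ≤ (16 * u ^ 2 * (‖x‖ ^ 2 + 2 / 3 * u ^ 2) + 4 * d * u ^ 4) / (‖x‖ ^ 2 + 2 / 3 * u ^ 2) := by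
        gcongr; nlinarith [sq_nonneg u]
    _ = u ^ 2 * (16 + 4 * d * u ^ 2 / (‖x‖ ^ 2 + 2 / 3 * u ^ 2)) := by field_simp
end

section
/- For every x ∈ ℝ^d, every real p ≥ 2, every u ∈ ℝ and every index k, writing f_p(x) = ‖x‖_p, one has |f_p(x + u e_k) - f_p(x)| ≤ p |u| ((|x_k| + |u|) / (‖x‖_p^p + |u|^p)^{1/p})^{p-1}. -/
/-!
With `c = ∑_{i ≠ k} |x i| ^ p`, `a = |x k|` and `b = |x k + u|`, both norms are values of
`N t = (c + t ^ p) ^ (1 / p)`, and `|b - a| ≤ |u|`. For `0 ≤ m ≤ M`, the convexity bounds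
`X ^ (p - 1) * (X - Y) ≤ X ^ p - Y ^ p ≤ p * X ^ (p - 1) * (X - Y)`, used once for `N M, N m` and once
for `M, m` (note `N M ^ p - N m ^ p = M ^ p - m ^ p`), give `N M - N m ≤ p * (M - m) * (M / N M) ^ (p - 1)`.
Finally `M / N M ≤ (a + |u|) / (c + a ^ p + |u| ^ p) ^ (1 / p)` for `M ≤ a + |u|`, since `t ^ p / (c + t ^ p)`
increases with `t` and `a ^ p + |u| ^ p ≤ (a + |u|) ^ p`.
-/

/-- The ℓ^p norm of a vector in ℝ^d, using real powers. -/
noncomputable def lpNorm {d : ℕ} (p : ℝ) (x : Fin d → ℝ) : ℝ :=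
  (∑ k : Fin d, |x k| ^ p) ^ (1 / p)

open Real Finset

section RpowEstimates

variable {p x y : ℝ}

lemma rpow_one_div_rpow (hx : 0 ≤ x) (hp : p ≠ 0) : (x ^ (1 / p)) ^ p = x := by
  rw [← rpow_mul hx, one_div_mul_cancel hp, rpow_one]

lemma rpow_eq_rpow_sub_one_mul (hp : 1 ≤ p) (hx : 0 ≤ x) : x ^ p = x ^ (p - 1) * x := by
  simpa using rpow_add_one' hx (y := p - 1) (by linarith)

lemma rpow_sub_one_mul_sub_le_rpow_sub_rpow (hp : 1 ≤ p) (hy : 0 ≤ y) (hyx : y ≤ x) :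
    x ^ (p - 1) * (x - y) ≤ x ^ p - y ^ p := by
  rw [rpow_eq_rpow_sub_one_mul hp (hy.trans hyx), rpow_eq_rpow_sub_one_mul hp hy]
  nlinarith [rpow_le_rpow hy hyx (by linarith : 0 ≤ p - 1)]

lemma rpow_sub_rpow_le_mul_rpow_sub_one_mul_sub (hp : 1 ≤ p) (hy : 0 ≤ y) (hyx : y ≤ x) :
    x ^ p - y ^ p ≤ p * x ^ (p - 1) * (x - y) := by
  rcases (hy.trans hyx).eq_or_lt with rfl | hx
  · simp [le_antisymm hyx hy, zero_rpow (by linarith : p ≠ 0)]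
  have bernoulli := one_add_mul_self_le_rpow_one_add (s := y / x - 1) (by
    have : 0 ≤ y / x := by positivity
    linarith) hp
  rw [add_sub_cancel, div_rpow hy hx.le, le_div_iff₀ (by positivity)] at bernoulli
  have hxp : x ^ p * (y / x - 1) = x ^ (p - 1) * (y - x) := by
    rw [rpow_eq_rpow_sub_one_mul hp hx.le]
    field_simp
  nlinarith

end RpowEstimates

section RootEstimates

variable {p a b c m M U : ℝ}

lemma rpow_root_sub_rpow_root_le (hp : 1 ≤ p) (hc : 0 ≤ c) (hm : 0 ≤ m) (hmM : m ≤ M) :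
    (c + M ^ p) ^ (1 / p) - (c + m ^ p) ^ (1 / p) ≤
      p * (M - m) * (M / (c + M ^ p) ^ (1 / p)) ^ (p - 1) := by
  have hM := hm.trans hmM
  rcases hM.eq_or_lt with rfl | hM
  · simp [le_antisymm hmM hm]
  set X := (c + M ^ p) ^ (1 / p)
  set Y := (c + m ^ p) ^ (1 / p)
  have hX : 0 < X := by positivity
  have hYX : Y ≤ X := rpow_le_rpow (by positivity) (by gcongr) (by positivity)
  have hpow : X ^ p - Y ^ p = M ^ p - m ^ p := by
    rw [rpow_one_div_rpow (by positivity) (by linarith),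
      rpow_one_div_rpow (by positivity) (by linarith)]
    ring
  have key : X ^ (p - 1) * (X - Y) ≤ p * M ^ (p - 1) * (M - m) :=
    calc X ^ (p - 1) * (X - Y) ≤ X ^ p - Y ^ p :=
          rpow_sub_one_mul_sub_le_rpow_sub_rpow hp (by positivity) hYX
      _ = M ^ p - m ^ p := hpow
      _ ≤ p * M ^ (p - 1) * (M - m) := rpow_sub_rpow_le_mul_rpow_sub_one_mul_sub hp hm hmM
  rw [div_rpow hM.le hX.le, mul_div_assoc', le_div_iff₀ (by positivity)]
  linarith

lemma div_rpow_root_le (hp : 1 ≤ p) (hc : 0 ≤ c) (ha : 0 ≤ a) (hU : 0 ≤ U) (hM : 0 ≤ M)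
    (hMaU : M ≤ a + U) :
    M / (c + M ^ p) ^ (1 / p) ≤ (a + U) / (c + a ^ p + U ^ p) ^ (1 / p) := by
  rcases hM.eq_or_lt with rfl | hM
  · simp only [zero_div]
    positivity
  have hp0 : 0 < p := by linarith
  have hD : 0 < c + a ^ p + U ^ p := by
    rcases ha.eq_or_lt with rfl | ha
    · have : 0 < U ^ p := rpow_pos_of_pos (by linarith) p
      linarith [rpow_nonneg le_rfl p]
    · have : 0 < a ^ p := rpow_pos_of_pos ha p
      linarith [rpow_nonneg hU p]
  rw [← rpow_le_rpow_iff (by positivity) (by positivity) hp0, div_rpow hM.le (by positivity),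
    div_rpow (by positivity) (by positivity), rpow_one_div_rpow (by positivity) hp0.ne',
    rpow_one_div_rpow hD.le hp0.ne', div_le_div_iff₀ (by positivity) hD]
  have hMp : M ^ p ≤ (a + U) ^ p := by gcongr
  have hsuper : a ^ p + U ^ p ≤ (a + U) ^ p := add_rpow_le_rpow_add ha hU hp
  nlinarith [rpow_nonneg hM.le p]

lemma abs_rpow_root_sub_le (hp : 1 ≤ p) (hc : 0 ≤ c) (ha : 0 ≤ a) (hb : 0 ≤ b)
    (hba : |b - a| ≤ U) :
    |(c + b ^ p) ^ (1 / p) - (c + a ^ p) ^ (1 / p)| ≤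
      p * U * ((a + U) / (c + a ^ p + U ^ p) ^ (1 / p)) ^ (p - 1) := by
  have hU : 0 ≤ U := (abs_nonneg _).trans hba
  have hmono : MonotoneOn (fun t : ℝ ↦ (c + t ^ p) ^ (1 / p)) (Set.Ici 0) :=
    fun s (hs : 0 ≤ s) t _ hst ↦
      rpow_le_rpow (by positivity) (by gcongr) (by positivity)
  rw [abs_sub_comm, ← max_sub_min_eq_abs', ← hmono.map_max ha hb, ← hmono.map_min ha hb]
  calc _ ≤ p * (max a b - min a b) * (max a b / (c + max a b ^ p) ^ (1 / p)) ^ (p - 1) :=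
        rpow_root_sub_rpow_root_le hp hc (le_min ha hb) min_le_max
    _ ≤ p * U * ((a + U) / (c + a ^ p + U ^ p) ^ (1 / p)) ^ (p - 1) := by
        gcongr p * ?_ * ?_ ^ (p - 1)
        · rwa [max_sub_min_eq_abs]
        · exact div_rpow_root_le hp hc ha hU (le_max_of_le_left ha)
            (max_le (by linarith) (by linarith [le_abs_self (b - a)]))

end RootEstimates

lemma lpNorm_add_single {d : ℕ} (p : ℝ) (x : Fin d → ℝ) (k : Fin d) (u : ℝ) :
    lpNorm p (x + Pi.single k u) = (∑ i ∈ univ.erase k, |x i| ^ p + |x k + u| ^ p) ^ (1 / p) := by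
  rw [lpNorm, ← sum_erase_add _ _ (mem_univ k)]
  congr 2
  · refine sum_congr rfl fun i hi ↦ ?_
    simp [Pi.single_eq_of_ne (ne_of_mem_erase hi)]
  · simp

theorem stmt_14 (d : ℕ) (x : Fin d → ℝ) (p : ℝ) (hp : 2 ≤ p) (u : ℝ) (k : Fin d) :
    |lpNorm p (x + Pi.single k u) - lpNorm p x| ≤
      p * |u| * ((|x k| + |u|) / ((lpNorm p x) ^ p + |u| ^ p) ^ (1 / p)) ^ (p - 1) := by
  have hc : 0 ≤ ∑ i ∈ univ.erase k, |x i| ^ p := sum_nonneg fun i _ ↦ by positivity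
  have hx : lpNorm p x = (∑ i ∈ univ.erase k, |x i| ^ p + |x k| ^ p) ^ (1 / p) := by
    simpa using lpNorm_add_single p x k 0
  rw [lpNorm_add_single, hx, rpow_one_div_rpow (by positivity) (by linarith)]
  exact abs_rpow_root_sub_le (by linarith) hc (abs_nonneg _) (abs_nonneg _)
    (by simpa using abs_abs_sub_abs_le_abs_sub (x k + u) (x k))
end

section
/- Let X be a real-valued nonnegative random variable, let R, λ, V > 0 and c ≥ R/λ, and suppose that for all u ≥ 0, P(X ≥ c + u) ≤ exp(u/R − (u/R + V²/R²) log(1 + Ru/V²)). If λ V²/R² < 1/e, then E[exp((X/R) log⁺(λ X / R))] < ∞, where log⁺(t) = max(log t, 0). -/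
open MeasureTheory Real Set

set_option maxHeartbeats 2000000 in
theorem stmt_18 {Ω : Type*} [MeasurableSpace Ω] (μ : Measure Ω) [IsProbabilityMeasure μ]
    (X : Ω → ℝ) (hX : Measurable X) (hXnn : ∀ ω, 0 ≤ X ω)
    (R lam V c : ℝ) (hR : 0 < R) (hlam : 0 < lam) (hV : 0 < V) (hc : R / lam ≤ c)
    (htail : ∀ u : ℝ, 0 ≤ u →
      μ {ω | c + u ≤ X ω} ≤
        ENNReal.ofReal (Real.exp (u / R - (u / R + V ^ 2 / R ^ 2) * Real.log (1 + R * u / V ^ 2))))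
    (hsmall : lam * V ^ 2 / R ^ 2 < (Real.exp 1)⁻¹) :
    Integrable (fun ω => Real.exp ((X ω / R) * max (Real.log (lam * X ω / R)) 0)) μ := by
  have hRl : 0 < R / lam := div_pos hR hlam
  have hc0 : 0 < c := lt_of_lt_of_le hRl hc
  set β := Real.log (lam * V ^ 2 / R ^ 2) with hβdef
  have hq : 0 < lam * V ^ 2 / R ^ 2 := by positivity
  have hβ : β < -1 := by
    have h := Real.log_lt_log hq hsmall
    rwa [Real.log_inv, Real.log_exp] at h
  set δ := -(1 + β) with hδdef
  have hδ : 0 < δ := by rw [hδdef]; linarith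
  set ε := δ / (2 * R) with hεdef
  have hε : 0 < ε := by positivity
  set a0 := δ * V ^ 2 / (2 * c * R) with ha0def
  have ha0 : 0 < a0 := by positivity
  set C₂ := (c / R) * (a0 - 1 - Real.log a0) with hC₂def
  set D₂ := c ^ 2 / V ^ 2 + c / R with hD₂def
  set C₃ := (c / R) * β + D₂ + C₂ with hC₃def
  set A := (1 / R) * ((lam / R + 1 / c) * (2 / ε)) * Real.exp (C₃ + ε * c) with hAdef
  -- the density φ
  set φ : ℝ → ℝ := fun t =>
    if t ≤ R / lam then 0
    else (1 / R) * (Real.log (lam * t / R) + 1) * Real.exp ((t / R) * Real.log (lam * t / R))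
    with hφdef
  have hlog0 : ∀ z : ℝ, R / lam ≤ z → 0 ≤ Real.log (lam * z / R) := by
    intro z hz
    apply Real.log_nonneg
    rw [le_div_iff₀ hR]
    rw [div_le_iff₀ hlam] at hz
    linarith
  have hφmono : Monotone φ := by
    intro x y hxy
    simp only [hφdef]
    split_ifs with hx hy hy
    · exact le_rfl
    · have h0 : 0 ≤ Real.log (lam * y / R) := hlog0 y (not_le.mp hy).le
      have := Real.exp_pos ((y / R) * Real.log (lam * y / R))
      have h1 : (0:ℝ) ≤ 1 / R := by positivity
      exact mul_nonneg (mul_nonneg h1 (by linarith)) (Real.exp_pos _).le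
    · exact absurd (hxy.trans hy) hx
    · have hx' : R / lam < x := not_le.mp hx
      have hy' : R / lam < y := not_le.mp hy
      have hx0 : 0 < x := lt_trans hRl hx'
      have lx0 : 0 ≤ Real.log (lam * x / R) := hlog0 x hx'.le
      have ly0 : 0 ≤ Real.log (lam * y / R) := hlog0 y hy'.le
      have h1 : Real.log (lam * x / R) ≤ Real.log (lam * y / R) := by
        apply Real.log_le_log (by positivity)
        gcongr
      have hy0 : 0 < y := lt_trans hRl hy'
      have key : (x / R) * Real.log (lam * x / R) ≤ (y / R) * Real.log (lam * y / R) := by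
        apply mul_le_mul (by gcongr) h1 lx0 (div_nonneg hy0.le hR.le)
      apply mul_le_mul (mul_le_mul le_rfl (by linarith) (by linarith) (by positivity))
        (Real.exp_le_exp.mpr key) (Real.exp_pos _).le
        (mul_nonneg (by positivity) (by linarith))
  have hφnn : ∀ t, 0 ≤ φ t := by
    intro t
    have h := hφmono (min_le_left t (R / lam))
    have h0 : φ (min t (R / lam)) = 0 := by
      simp only [hφdef]
      rw [if_pos (min_le_right _ _)]
    rw [h0] at h
    exact h
  -- integral of φ over [0, y] vanishes for y ≤ R/lam
  have hzero : ∀ y : ℝ, 0 ≤ y → y ≤ R / lam → ∫ t in (0)..y, φ t = 0 := by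
    intro y hy0 hy
    have : EqOn φ (fun _ => (0:ℝ)) (uIcc 0 y) := by
      intro t ht
      rw [uIcc_of_le hy0] at ht
      simp only [hφdef]
      rw [if_pos (ht.2.trans hy)]
    rw [intervalIntegral.integral_congr this]
    simp
  -- FTC
  have hFTC : ∀ x : ℝ, 0 ≤ x →
      ∫ t in (0)..x, φ t = Real.exp ((x / R) * max (Real.log (lam * x / R)) 0) - 1 := by
    intro x hx
    rcases le_or_gt x (R / lam) with hxle | hxgt
    · have h2 : max (Real.log (lam * x / R)) 0 = 0 := by
        apply max_eq_right
        apply Real.log_nonpos (by positivity)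
        rw [div_le_one hR]
        rw [le_div_iff₀ hlam] at hxle
        linarith
      rw [hzero x hx hxle, h2]
      simp
    · set ψ : ℝ → ℝ := fun t =>
        (1 / R) * (Real.log (lam * t / R) + 1) * Real.exp ((t / R) * Real.log (lam * t / R))
        with hψdef
      set H : ℝ → ℝ := fun t => Real.exp ((t / R) * Real.log (lam * t / R)) with hHdef
      have hderiv : ∀ t ∈ uIcc (R / lam) x, HasDerivAt H (ψ t) t := by
        intro t ht
        rw [uIcc_of_le hxgt.le] at ht
        have ht0 : 0 < t := lt_of_lt_of_le hRl ht.1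
        have h1 : HasDerivAt (fun s : ℝ => lam * s / R) (lam / R) t := by
          simpa using ((hasDerivAt_id t).const_mul lam).div_const R
        have h2 : HasDerivAt (fun s : ℝ => Real.log (lam * s / R)) (1 / t) t := by
          have h := h1.log (by positivity)
          convert h using 1
          field_simp
        have h3 : HasDerivAt (fun s : ℝ => (s / R) * Real.log (lam * s / R))
            ((1 / R) * Real.log (lam * t / R) + (t / R) * (1 / t)) t :=
          ((hasDerivAt_id t).div_const R).mul h2
        have h4 := h3.exp
        convert h4 using 1
        simp only [hψdef, hHdef]
        field_simp
      have hcont : ContinuousOn ψ (uIcc (R / lam) x) := by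
        have h0 : ∀ t ∈ uIcc (R / lam) x, lam * t / R ≠ 0 := by
          intro t ht
          rw [uIcc_of_le hxgt.le] at ht
          have : 0 < t := lt_of_lt_of_le hRl ht.1
          positivity
        have hlog : ContinuousOn (fun t : ℝ => Real.log (lam * t / R)) (uIcc (R / lam) x) :=
          (Continuous.continuousOn ((continuous_const.mul continuous_id).div_const R)).log h0
        exact (continuousOn_const.mul (hlog.add continuousOn_const)).mul
          (Real.continuous_exp.comp_continuousOn
            (((continuous_id.div_const R).continuousOn).mul hlog))
      have key : ∫ t in (R / lam)..x, φ t = H x - H (R / lam) := by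
        have heq : ∫ t in (R / lam)..x, φ t = ∫ t in (R / lam)..x, ψ t := by
          rw [intervalIntegral.integral_of_le hxgt.le, intervalIntegral.integral_of_le hxgt.le]
          apply setIntegral_congr_fun measurableSet_Ioc
          intro t ht
          simp only [hφdef, hψdef]
          rw [if_neg (not_le.mpr ht.1)]
        rw [heq]
        exact intervalIntegral.integral_eq_sub_of_hasDerivAt hderiv hcont.intervalIntegrable
      have hsplit : ∫ t in (0)..x, φ t =
          (∫ t in (0)..(R / lam), φ t) + ∫ t in (R / lam)..x, φ t :=
        (intervalIntegral.integral_add_adjacent_intervals hφmono.intervalIntegrable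
          hφmono.intervalIntegrable).symm
      have hHx : H x = Real.exp ((x / R) * max (Real.log (lam * x / R)) 0) := by
        simp only [hHdef]
        rw [max_eq_left (hlog0 x hxgt.le)]
      have hH1 : H (R / lam) = 1 := by
        simp only [hHdef]
        rw [show lam * (R / lam) / R = 1 by field_simp]
        simp
      rw [hsplit, hzero (R / lam) hRl.le le_rfl, key, hHx, hH1]
      ring
  -- key pointwise bound for t > c
  have hbound : ∀ t : ℝ, c < t →
      Real.exp ((t - c) / R - ((t - c) / R + V ^ 2 / R ^ 2) * Real.log (1 + R * (t - c) / V ^ 2))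
        * φ t ≤ A * Real.exp (-(ε / 2) * t) := by
    intro t ht
    obtain ⟨u, hu0, rfl⟩ : ∃ u, 0 < u ∧ t = c + u := ⟨t - c, by linarith, by ring⟩
    rw [show c + u - c = u from by ring]
    set t := c + u with htdef
    have htpos : 0 < t := by rw [htdef]; linarith
    set L := Real.log (1 + R * u / V ^ 2) with hLdef
    have hLnn : 0 ≤ L := by
      apply Real.log_nonneg
      have : 0 ≤ R * u / V ^ 2 := by positivity
      linarith
    set lgt := Real.log (lam * t / R) with hlgtdef
    have hlt : 0 < lam * t / R := by positivity
    have hlgt0 : 0 ≤ lgt := hlog0 t (by rw [htdef]; linarith)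
    have hd : 0 < V ^ 2 + R * u := by positivity
    -- (i) log identity and bound
    have hlog_id : lgt = β + L + Real.log (R * t / (V ^ 2 + R * u)) := by
      rw [hlgtdef, hβdef, hLdef]
      rw [← Real.log_mul (by positivity) (by positivity),
        ← Real.log_mul (by positivity) (by positivity)]
      congr 1
      field_simp
    have hlog3 : Real.log (R * t / (V ^ 2 + R * u)) ≤ R * c / (V ^ 2 + R * u) := by
      have h := Real.log_le_sub_one_of_pos (show 0 < R * t / (V ^ 2 + R * u) by positivity)
      have h2 : R * t / (V ^ 2 + R * u) - 1 = (R * c - V ^ 2) / (V ^ 2 + R * u) := by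
        rw [htdef]; field_simp; ring
      have h3 : (R * c - V ^ 2) / (V ^ 2 + R * u) ≤ R * c / (V ^ 2 + R * u) :=
        div_le_div₀ (by positivity) (by nlinarith [sq_nonneg V]) hd le_rfl
      linarith
    have hW2 : (t / R) * (R * c / (V ^ 2 + R * u)) ≤ D₂ := by
      have e1 : (t / R) * (R * c / (V ^ 2 + R * u))
          = c * c / (V ^ 2 + R * u) + u * c / (V ^ 2 + R * u) := by
        rw [htdef]
        field_simp
      have h1 : c * c / (V ^ 2 + R * u) ≤ c ^ 2 / V ^ 2 :=
        div_le_div₀ (by positivity) (by nlinarith) (by positivity) (by nlinarith)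
      have h2 : u * c / (V ^ 2 + R * u) ≤ c / R := by
        rw [div_le_div_iff₀ hd hR]
        nlinarith [mul_nonneg hc0.le (sq_nonneg V)]
      rw [hD₂def, e1]
      linarith
    -- (iii)
    have hL2 : (c / R) * L ≤ C₂ + (δ / (2 * R)) * u := by
      have hy : 0 < a0 * (1 + R * u / V ^ 2) := by positivity
      have h := Real.log_le_sub_one_of_pos hy
      have hlogsplit : Real.log (a0 * (1 + R * u / V ^ 2)) = Real.log a0 + L := by
        rw [hLdef]
        exact Real.log_mul (ne_of_gt ha0) (by positivity)
      have hexp : a0 * (1 + R * u / V ^ 2) = a0 + a0 * (R * u / V ^ 2) := by ring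
      have hLle : L ≤ a0 + a0 * (R * u / V ^ 2) - 1 - Real.log a0 := by
        rw [hlogsplit, hexp] at h
        linarith
      have hcR : (0:ℝ) ≤ c / R := by positivity
      have hmul := mul_le_mul_of_nonneg_left hLle hcR
      have hid : (c / R) * (a0 * (R * u / V ^ 2)) = (δ / (2 * R)) * u := by
        rw [ha0def]
        field_simp
      calc (c / R) * L ≤ (c / R) * (a0 + a0 * (R * u / V ^ 2) - 1 - Real.log a0) := hmul
        _ = C₂ + (c / R) * (a0 * (R * u / V ^ 2)) := by rw [hC₂def]; ring
        _ = C₂ + (δ / (2 * R)) * u := by rw [hid]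
    -- (ii) exponent bound
    have htR : (0:ℝ) ≤ t / R := by positivity
    have hE : (t / R) * lgt + (u / R - (u / R + V ^ 2 / R ^ 2) * L) ≤ C₃ - ε * u := by
      have hlg : lgt ≤ β + L + R * c / (V ^ 2 + R * u) := by rw [hlog_id]; linarith
      have h1 : (t / R) * lgt ≤ (t / R) * (β + L) + (t / R) * (R * c / (V ^ 2 + R * u)) :=
        calc (t / R) * lgt ≤ (t / R) * (β + L + R * c / (V ^ 2 + R * u)) :=
              mul_le_mul_of_nonneg_left hlg htR
          _ = (t / R) * (β + L) + (t / R) * (R * c / (V ^ 2 + R * u)) := by ring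
      have hV2L : 0 ≤ (V ^ 2 / R ^ 2) * L := mul_nonneg (by positivity) hLnn
      have e2 : (t / R) * (β + L) + (u / R - (u / R + V ^ 2 / R ^ 2) * L)
          = (c / R) * β + (c / R) * L + (u / R) * (β + 1) - (V ^ 2 / R ^ 2) * L := by
        rw [htdef]; ring
      have e3 : (u / R) * (β + 1) = -(δ / R) * u := by rw [hδdef]; ring
      have efin : (c / R) * β + (C₂ + (δ / (2 * R)) * u) + (-(δ / R) * u) + D₂ = C₃ - ε * u := by
        rw [hC₃def, hεdef]; ring
      calc (t / R) * lgt + (u / R - (u / R + V ^ 2 / R ^ 2) * L)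
          ≤ (t / R) * (β + L) + (t / R) * (R * c / (V ^ 2 + R * u))
            + (u / R - (u / R + V ^ 2 / R ^ 2) * L) := by linarith
        _ = (c / R) * β + (c / R) * L + (u / R) * (β + 1) - (V ^ 2 / R ^ 2) * L
            + (t / R) * (R * c / (V ^ 2 + R * u)) := by rw [← e2]; ring
        _ ≤ (c / R) * β + (C₂ + (δ / (2 * R)) * u) + (-(δ / R) * u) + D₂ := by
            rw [← e3]; linarith
        _ = C₃ - ε * u := efin
    -- assemble
    have hφt : φ t = (1 / R) * (lgt + 1) * Real.exp ((t / R) * lgt) := by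
      simp only [hφdef, hlgtdef]
      rw [if_neg (not_le.mpr (show R / lam < t by rw [htdef]; linarith))]
    have hpre : lgt + 1 ≤ lam * t / R + 1 := by
      linarith [Real.log_le_sub_one_of_pos hlt]
    have htexp : t ≤ (2 / ε) * Real.exp ((ε / 2) * t) := by
      have h1 : (ε / 2) * t + 1 ≤ Real.exp ((ε / 2) * t) := Real.add_one_le_exp _
      have h2 : (ε / 2) * t ≤ Real.exp ((ε / 2) * t) := by linarith
      calc t = (2 / ε) * ((ε / 2) * t) := by field_simp
        _ ≤ (2 / ε) * Real.exp ((ε / 2) * t) := by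
            apply mul_le_mul_of_nonneg_left h2 (by positivity)
    have hlin : lam * t / R + 1 ≤ (lam / R + 1 / c) * t := by
      have h1 : 1 ≤ t / c := (one_le_div hc0).mpr (by rw [htdef]; linarith)
      have h2 : 1 / c * t = t / c := by ring
      calc lam * t / R + 1 ≤ lam * t / R + t / c := by linarith
        _ = (lam / R + 1 / c) * t := by ring
    rw [hφt]
    calc Real.exp (u / R - (u / R + V ^ 2 / R ^ 2) * L)
          * ((1 / R) * (lgt + 1) * Real.exp ((t / R) * lgt))
        = (1 / R) * (lgt + 1)
            * Real.exp ((t / R) * lgt + (u / R - (u / R + V ^ 2 / R ^ 2) * L)) := by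
          rw [Real.exp_add]; ring
      _ ≤ (1 / R) * (lam * t / R + 1) * Real.exp (C₃ - ε * u) := by
          apply mul_le_mul (mul_le_mul le_rfl hpre (by linarith) (by positivity))
            (Real.exp_le_exp.mpr hE) (Real.exp_pos _).le (by positivity)
      _ = (1 / R) * (lam * t / R + 1) * Real.exp ((C₃ + ε * c) + -ε * t) := by
          rw [show (C₃ + ε * c) + -ε * t = C₃ - ε * u from by rw [htdef]; ring]
      _ = (1 / R) * (lam * t / R + 1) * (Real.exp (C₃ + ε * c) * Real.exp (-ε * t)) := by
          rw [Real.exp_add]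
      _ ≤ (1 / R) * ((lam / R + 1 / c) * ((2 / ε) * Real.exp ((ε / 2) * t)))
            * (Real.exp (C₃ + ε * c) * Real.exp (-ε * t)) := by
          apply mul_le_mul_of_nonneg_right ?_ (by positivity)
          apply mul_le_mul_of_nonneg_left ?_ (by positivity)
          calc lam * t / R + 1 ≤ (lam / R + 1 / c) * t := hlin
            _ ≤ (lam / R + 1 / c) * ((2 / ε) * Real.exp ((ε / 2) * t)) := by
                apply mul_le_mul_of_nonneg_left htexp (by positivity)
      _ = A * Real.exp (-(ε / 2) * t) := by
          rw [hAdef]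
          rw [show Real.exp (-(ε / 2) * t) = Real.exp ((ε / 2) * t) * Real.exp (-ε * t) from by
            rw [← Real.exp_add]; congr 1; ring]
          ring
  -- measurability of the target
  have hmF : Measurable fun ω => Real.exp ((X ω / R) * max (Real.log (lam * X ω / R)) 0) := by
    apply Measurable.exp
    exact (hX.div_const R).mul
      ((Real.measurable_log.comp ((hX.const_mul lam).div_const R)).max measurable_const)
  -- layercake
  have hlayer := lintegral_comp_eq_lintegral_meas_le_mul μ (f := X) (g := φ)
    (Filter.Eventually.of_forall hXnn) hX.aemeasurable
    (fun t _ => hφmono.intervalIntegrable)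
    (Filter.Eventually.of_forall hφnn)
  -- finiteness of the RHS
  have hIoc : ∫⁻ t in Ioc 0 c, μ {a | t ≤ X a} * ENNReal.ofReal (φ t) < ⊤ := by
    calc ∫⁻ t in Ioc 0 c, μ {a | t ≤ X a} * ENNReal.ofReal (φ t)
        ≤ ∫⁻ _ in Ioc 0 c, ENNReal.ofReal (φ c) := by
          apply setLIntegral_mono measurable_const
          intro t htmem
          calc μ {a | t ≤ X a} * ENNReal.ofReal (φ t)
              ≤ 1 * ENNReal.ofReal (φ c) :=
                mul_le_mul' prob_le_one (ENNReal.ofReal_le_ofReal (hφmono htmem.2))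
            _ = ENNReal.ofReal (φ c) := one_mul _
      _ = ENNReal.ofReal (φ c) * volume (Ioc 0 c) := setLIntegral_const _ _
      _ < ⊤ := by
          rw [Real.volume_Ioc]
          exact ENNReal.mul_lt_top ENNReal.ofReal_lt_top ENNReal.ofReal_lt_top
  have hIoi : ∫⁻ t in Ioi c, μ {a | t ≤ X a} * ENNReal.ofReal (φ t) < ⊤ := by
    have hmaj : ∀ t ∈ Ioi c, μ {a | t ≤ X a} * ENNReal.ofReal (φ t)
        ≤ ENNReal.ofReal (A * Real.exp (-(ε / 2) * t)) := by
      intro t htmem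
      have htc : c < t := htmem
      have h1 := htail (t - c) (by linarith)
      rw [show c + (t - c) = t by ring] at h1
      calc μ {a | t ≤ X a} * ENNReal.ofReal (φ t)
          ≤ ENNReal.ofReal (Real.exp ((t - c) / R
              - ((t - c) / R + V ^ 2 / R ^ 2) * Real.log (1 + R * (t - c) / V ^ 2)))
            * ENNReal.ofReal (φ t) := mul_le_mul_left h1 _
        _ = ENNReal.ofReal (Real.exp ((t - c) / R
              - ((t - c) / R + V ^ 2 / R ^ 2) * Real.log (1 + R * (t - c) / V ^ 2)) * φ t) :=
            (ENNReal.ofReal_mul (Real.exp_pos _).le).symm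
        _ ≤ ENNReal.ofReal (A * Real.exp (-(ε / 2) * t)) :=
            ENNReal.ofReal_le_ofReal (hbound t htc)
    calc ∫⁻ t in Ioi c, μ {a | t ≤ X a} * ENNReal.ofReal (φ t)
        ≤ ∫⁻ t in Ioi c, ENNReal.ofReal (A * Real.exp (-(ε / 2) * t)) := by
          apply setLIntegral_mono
          · exact (measurable_const.mul (Real.measurable_exp.comp
              (measurable_const.mul measurable_id))).ennreal_ofReal
          · exact hmaj
      _ < ⊤ := IntegrableOn.setLIntegral_lt_top
          ((exp_neg_integrableOn_Ioi c (by positivity : (0:ℝ) < ε / 2)).const_mul A)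
  have hRHS : ∫⁻ t in Ioi 0, μ {a | t ≤ X a} * ENNReal.ofReal (φ t) < ⊤ := by
    rw [← Ioc_union_Ioi_eq_Ioi hc0.le,
      lintegral_union measurableSet_Ioi (Ioc_disjoint_Ioi le_rfl)]
    exact ENNReal.add_lt_top.mpr ⟨hIoc, hIoi⟩
  -- conclude
  constructor
  · exact hmF.aestronglyMeasurable
  · rw [hasFiniteIntegral_iff_ofReal (Filter.Eventually.of_forall fun ω => (Real.exp_pos _).le)]
    have hsplitF : ∀ ω, ENNReal.ofReal (Real.exp ((X ω / R) * max (Real.log (lam * X ω / R)) 0))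
        = ENNReal.ofReal (Real.exp ((X ω / R) * max (Real.log (lam * X ω / R)) 0) - 1) + 1 := by
      intro ω
      have harg : 0 ≤ (X ω / R) * max (Real.log (lam * X ω / R)) 0 :=
        mul_nonneg (div_nonneg (hXnn ω) hR.le) (le_max_right _ _)
      have h1 : (1:ℝ) ≤ Real.exp ((X ω / R) * max (Real.log (lam * X ω / R)) 0) :=
        Real.one_le_exp harg
      rw [← ENNReal.ofReal_one, ← ENNReal.ofReal_add (by linarith) zero_le_one]
      congr 1
      ring
    calc ∫⁻ ω, ENNReal.ofReal (Real.exp ((X ω / R) * max (Real.log (lam * X ω / R)) 0)) ∂μ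
        = ∫⁻ ω, (ENNReal.ofReal (Real.exp ((X ω / R) * max (Real.log (lam * X ω / R)) 0) - 1)
            + 1) ∂μ := lintegral_congr hsplitF
      _ = (∫⁻ ω, ENNReal.ofReal (Real.exp ((X ω / R) * max (Real.log (lam * X ω / R)) 0) - 1) ∂μ)
            + 1 := by
          rw [lintegral_add_right _ measurable_const, lintegral_const, one_mul, measure_univ]
      _ = (∫⁻ ω, ENNReal.ofReal (∫ t in (0)..X ω, φ t) ∂μ) + 1 := by
          congr 1
          apply lintegral_congr
          intro ω
          rw [hFTC (X ω) (hXnn ω)]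
      _ = (∫⁻ t in Ioi 0, μ {a | t ≤ X a} * ENNReal.ofReal (φ t)) + 1 := by rw [hlayer]
      _ < ⊤ := by
          apply ENNReal.add_lt_top.mpr ⟨hRHS, ENNReal.one_lt_top⟩
end
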